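/- If f : ℝ → ℝ is bounded and Zygmund continuous with constant K, and ρ is a smooth even function supported in [-1,1] with ∫ρ = 1, then for every γ ≥ 1 and ε ∈ (0,1], the first derivative of f_ε = ρ_ε * f satisfies |f_ε'(t)| ≤ C·log(1 + γ + 1/ε) for all t, with C depending only on K, ‖f‖_∞, γ and ρ. -/

import Mathlib

open MeasureTheory Set
open scoped Convolution

lemma zyg_dyadic (f : ℝ → ℝ) (K : ℝ)
    (hZ : ∀ t h : ℝ, h ≠ 0 → |f (t + h) + f (t - h) - 2 * f t| ≤ K * |h|)
    (t y : ℝ) (hy : y ≠ 0) (n : ℕ) :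
    |(f (t + y) - f t) - (f (t + 2 ^ n * y) - f t) / 2 ^ n| ≤ n * (K * |y|) / 2 := by
  induction n with
  | zero => simp
  | succ n ih =>
    have h2 : ((2:ℝ) ^ n * y) ≠ 0 := mul_ne_zero (pow_ne_zero _ two_ne_zero) hy
    have hz := hZ (t + 2 ^ n * y) (2 ^ n * y) h2
    rw [show t + 2 ^ n * y + 2 ^ n * y = t + 2 ^ (n+1) * y by ring,
        show t + 2 ^ n * y - 2 ^ n * y = t by ring,
        abs_mul, abs_pow, abs_two] at hz
    have hpos : (0:ℝ) < 2 ^ (n+1) := by positivity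
    have step : |(f (t + 2 ^ n * y) - f t) / 2 ^ n -
        (f (t + 2 ^ (n+1) * y) - f t) / 2 ^ (n+1)| ≤ K * |y| / 2 := by
      rw [show (f (t + 2 ^ n * y) - f t) / 2 ^ n - (f (t + 2 ^ (n+1) * y) - f t) / 2 ^ (n+1)
          = -((f (t + 2 ^ (n+1) * y) + f t - 2 * f (t + 2 ^ n * y)) / 2 ^ (n+1)) by ring,
        abs_neg, abs_div, abs_of_pos hpos, div_le_iff₀ hpos]
      calc |f (t + 2 ^ (n+1) * y) + f t - 2 * f (t + 2 ^ n * y)| ≤ K * (2 ^ n * |y|) := hz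
        _ = K * |y| / 2 * 2 ^ (n+1) := by ring
    calc |(f (t + y) - f t) - (f (t + 2 ^ (n+1) * y) - f t) / 2 ^ (n+1)|
        ≤ |(f (t + y) - f t) - (f (t + 2 ^ n * y) - f t) / 2 ^ n| +
          |(f (t + 2 ^ n * y) - f t) / 2 ^ n - (f (t + 2 ^ (n+1) * y) - f t) / 2 ^ (n+1)| :=
          abs_sub_le _ _ _
      _ ≤ n * (K * |y|) / 2 + K * |y| / 2 := add_le_add ih step
      _ = (n + 1 : ℕ) * (K * |y|) / 2 := by push_cast; ring

lemma zyg_log_ge_one {γ ε : ℝ} (hγ : 1 ≤ γ) (hε0 : 0 < ε) (hε1 : ε ≤ 1) :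
    1 ≤ Real.log (1 + γ + 1 / ε) := by
  have h1 : (1:ℝ) ≤ 1 / ε := one_le_one_div hε0 hε1
  have h3 : (3:ℝ) ≤ 1 + γ + 1 / ε := by linarith
  rw [Real.le_log_iff_exp_le (by linarith)]
  have := Real.exp_one_lt_d9
  linarith

lemma zyg_key (f : ℝ → ℝ) (K M : ℝ) (hK : 0 ≤ K) (hM : 0 ≤ M)
    (hbdd : ∀ t, |f t| ≤ M)
    (hZ : ∀ t h : ℝ, h ≠ 0 → |f (t + h) + f (t - h) - 2 * f t| ≤ K * |h|)
    (γ : ℝ) (hγ : 1 ≤ γ) (ε : ℝ) (hε0 : 0 < ε) (hε1 : ε ≤ 1) (t y : ℝ) (hy : |y| ≤ ε) :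
    |f (t + y) - f t| ≤ (3 * K / 2 + 2 * M) * (ε * Real.log (1 + γ + 1 / ε)) := by
  set L := Real.log (1 + γ + 1 / ε) with hLdef
  have hL1 : 1 ≤ L := zyg_log_ge_one hγ hε0 hε1
  have hL0 : 0 ≤ L := by linarith
  rcases eq_or_ne y 0 with rfl | hy0
  · simp only [add_zero, sub_self, abs_zero]
    positivity
  · set n := ⌈Real.logb 2 (1/ε)⌉₊ with hndef
    have h1ε : (1:ℝ) ≤ 1 / ε := one_le_one_div hε0 hε1
    have hlogb0 : 0 ≤ Real.logb 2 (1/ε) := Real.logb_nonneg one_lt_two h1ε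
    have hn_ge : 1 / ε ≤ 2 ^ n := by
      have h := Nat.le_ceil (Real.logb 2 (1/ε))
      calc (1:ℝ)/ε = 2 ^ Real.logb 2 (1/ε) := (Real.rpow_logb two_pos (by norm_num) (by positivity)).symm
        _ ≤ 2 ^ (n : ℝ) := Real.rpow_le_rpow_of_exponent_le one_le_two h
        _ = 2 ^ n := by rw [Real.rpow_natCast]
    have hn_le : (n : ℝ) ≤ Real.logb 2 (1/ε) + 1 := (Nat.ceil_lt_add_one hlogb0).le
    have hdy := zyg_dyadic f K hZ t y hy0 n
    have hpow : (0:ℝ) < 2 ^ n := by positivity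
    have hgn : |(f (t + 2 ^ n * y) - f t) / 2 ^ n| ≤ 2 * M * ε := by
      rw [abs_div, abs_of_pos hpow, div_le_iff₀ hpow]
      have h1 : |f (t + 2 ^ n * y) - f t| ≤ 2 * M := by
        calc |f (t + 2 ^ n * y) - f t| ≤ |f (t + 2 ^ n * y)| + |f t| := abs_sub _ _
          _ ≤ 2 * M := by have := hbdd (t + 2 ^ n * y); have := hbdd t; linarith
      have h2 : (1:ℝ) ≤ ε * 2 ^ n := by
        rw [div_le_iff₀ hε0] at hn_ge; linarith [hn_ge]
      nlinarith
    have htri : |f (t + y) - f t| ≤ n * (K * |y|) / 2 + 2 * M * ε := by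
      have := abs_sub_abs_le_abs_sub (f (t + y) - f t) ((f (t + 2 ^ n * y) - f t) / 2 ^ n)
      calc |f (t + y) - f t|
          ≤ |(f (t + y) - f t) - (f (t + 2 ^ n * y) - f t) / 2 ^ n|
            + |(f (t + 2 ^ n * y) - f t) / 2 ^ n| := by
            have := abs_sub_le (f (t + y) - f t) ((f (t + 2 ^ n * y) - f t) / 2 ^ n) 0
            simpa using this
        _ ≤ n * (K * |y|) / 2 + 2 * M * ε := add_le_add hdy hgn
    have hlog2 : (0.6931471803 : ℝ) < Real.log 2 := Real.log_two_gt_d9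
    have hlogL : Real.log (1/ε) ≤ L := by
      apply Real.log_le_log (by positivity); linarith
    have hnL : (n : ℝ) ≤ 3 * L := by
      have hlb : Real.logb 2 (1/ε) ≤ 2 * L := by
        rw [Real.logb, div_le_iff₀ (by linarith : (0:ℝ) < Real.log 2)]
        nlinarith
      linarith
    calc |f (t + y) - f t| ≤ n * (K * |y|) / 2 + 2 * M * ε := htri
      _ ≤ (3 * L) * (K * ε) / 2 + 2 * M * ε * L := by
        have h1 : (n:ℝ) * (K * |y|) ≤ (3 * L) * (K * ε) := by
          apply mul_le_mul hnL (by nlinarith) (by positivity) (by positivity)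
        nlinarith [h1, mul_nonneg (mul_nonneg hM hε0.le) (sub_nonneg.2 hL1)]
      _ = (3 * K / 2 + 2 * M) * (ε * L) := by ring

lemma zyg_tendsto (γ : ℝ) (hγ : 1 ≤ γ) :
    Filter.Tendsto (fun ε : ℝ => ε * Real.log (1 + γ + 1 / ε)) (nhdsWithin 0 (Ioi 0)) (nhds 0) := by
  have hub : Filter.Tendsto (fun ε : ℝ => ε * Real.log (2 + γ) - ε * Real.log ε)
      (nhdsWithin 0 (Ioi 0)) (nhds 0) := by
    have h1 : Filter.Tendsto (fun ε : ℝ => ε * Real.log (2 + γ)) (nhds (0:ℝ)) (nhds 0) := by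
      have hc : Continuous (fun ε : ℝ => ε * Real.log (2 + γ)) := continuous_id.mul continuous_const; simpa using hc.tendsto (0:ℝ)
    have h2 : Filter.Tendsto (fun ε : ℝ => ε * Real.log ε) (nhds (0:ℝ)) (nhds 0) := by
      simpa using Real.continuous_mul_log.tendsto (0:ℝ)
    have := (h1.sub h2).mono_left (nhdsWithin_le_nhds (s := Ioi (0:ℝ)))
    simpa using this
  apply squeeze_zero' ?_ ?_ hub
  · filter_upwards [self_mem_nhdsWithin] with ε (hε : 0 < ε)
    have h1 : (0:ℝ) < 1 / ε := by positivity
    exact mul_nonneg hε.le (Real.log_nonneg (by linarith))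
  · filter_upwards [Ioo_mem_nhdsGT_of_mem (by norm_num : (0:ℝ) ∈ Ico (0:ℝ) 1)] with ε hε
    obtain ⟨hε0, hε1⟩ := hε
    have harg : 1 + γ + 1 / ε ≤ (2 + γ) / ε := by
      have h1ε : (1:ℝ) ≤ 1 / ε := one_le_one_div hε0 hε1.le
      rw [le_div_iff₀ hε0]
      have : (1/ε) * ε = 1 := by field_simp
      nlinarith
    have hlog : Real.log (1 + γ + 1 / ε) ≤ Real.log (2 + γ) - Real.log ε := by
      rw [← Real.log_div (by positivity) hε0.ne']
      exact Real.log_le_log (by positivity) harg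
    calc ε * Real.log (1 + γ + 1 / ε) ≤ ε * (Real.log (2 + γ) - Real.log ε) :=
          mul_le_mul_of_nonneg_left hlog hε0.le
      _ = ε * Real.log (2 + γ) - ε * Real.log ε := by ring

lemma zyg_continuous (f : ℝ → ℝ) (K M : ℝ) (hK : 0 ≤ K) (hM : 0 ≤ M)
    (hbdd : ∀ t, |f t| ≤ M)
    (hZ : ∀ t h : ℝ, h ≠ 0 → |f (t + h) + f (t - h) - 2 * f t| ≤ K * |h|) :
    Continuous f := by
  rw [continuous_iff_continuousAt]
  intro t
  rw [Metric.continuousAt_iff]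
  intro δ hδ
  have htend : Filter.Tendsto (fun ε : ℝ => (3 * K / 2 + 2 * M) * (ε * Real.log (1 + 1 + 1 / ε)))
      (nhdsWithin 0 (Ioi 0)) (nhds 0) := by
    simpa using (zyg_tendsto 1 le_rfl).const_mul (3 * K / 2 + 2 * M)
  have hev : ∀ᶠ ε in nhdsWithin 0 (Ioi 0),
      (3 * K / 2 + 2 * M) * (ε * Real.log (1 + 1 + 1 / ε)) < δ :=
    htend.eventually (Filter.Tendsto.eventually_lt_const hδ Filter.tendsto_id) |>.mono (fun x h => h)
  rcases Metric.mem_nhdsWithin_iff.mp hev with ⟨η, hη0, hη⟩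
  refine ⟨min η 1, by positivity, ?_⟩
  intro x hx
  rcases eq_or_ne x t with rfl | hxt
  · simpa using hδ
  · have hε0 : 0 < |x - t| := abs_pos.2 (sub_ne_zero.2 hxt)
    have hdist : dist x t = |x - t| := Real.dist_eq x t
    have hε1 : |x - t| ≤ 1 := by
      have := hx; rw [hdist] at this
      exact le_of_lt (lt_of_lt_of_le this (min_le_right _ _))
    have hkey := zyg_key f K M hK hM hbdd hZ 1 le_rfl (|x - t|) hε0 hε1 t (x - t) le_rfl
    rw [show t + (x - t) = x by ring] at hkey
    have hmem : |x - t| ∈ Metric.ball (0:ℝ) η ∩ Ioi 0 := by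
      constructor
      · rw [Metric.mem_ball, Real.dist_eq, sub_zero, abs_abs]
        rw [hdist] at hx
        exact lt_of_lt_of_le hx (min_le_left _ _)
      · exact hε0
    have hlt := hη hmem
    rw [Real.dist_eq]
    exact lt_of_le_of_lt hkey hlt

/-- First derivative of the mollification of a bounded Zygmund function:
`|f_ε'(t)| ≤ C log(1 + γ + 1/ε)`. -/
theorem stmt_3
    (f : ℝ → ℝ) (K M : ℝ) (hbdd : ∀ t, |f t| ≤ M)
    (hZyg : ∀ t h : ℝ, 0 < h → |f (t + h) + f (t - h) - 2 * f t| ≤ K * h)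
    (ρ : ℝ → ℝ) (hρ_smooth : ContDiff ℝ (⊤ : ℕ∞) ρ) (hρ_even : ∀ t, ρ (-t) = ρ t)
    (hρ_supp : ∀ t, t ∉ Icc (-1 : ℝ) 1 → ρ t = 0)
    (hρ_int : ∫ t, ρ t = 1)
    (γ : ℝ) (hγ : 1 ≤ γ) :
    ∃ C > 0, ∀ ε ∈ Ioc (0 : ℝ) 1, ∀ t : ℝ,
      |deriv (fun τ => ∫ s, (1 / ε) * ρ ((τ - s) / ε) * f s) t| ≤
        C * Real.log (1 + γ + 1 / ε) := by
  have hK : 0 ≤ K := by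
    have h := hZyg 0 1 one_pos
    have h2 := abs_nonneg (f (0 + 1) + f (0 - 1) - 2 * f 0)
    linarith
  have hM : 0 ≤ M := le_trans (abs_nonneg (f 0)) (hbdd 0)
  have hZ : ∀ t h : ℝ, h ≠ 0 → |f (t + h) + f (t - h) - 2 * f t| ≤ K * |h| := by
    intro t h hh
    rcases lt_or_gt_of_ne hh with hneg | hpos
    · have h' := hZyg t (-h) (by linarith)
      rw [show t + -h = t - h by ring, show t - -h = t + h by ring] at h'
      rw [abs_of_neg hneg]
      calc |f (t + h) + f (t - h) - 2 * f t| = |f (t - h) + f (t + h) - 2 * f t| := by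
            rw [show f (t + h) + f (t - h) - 2 * f t = f (t - h) + f (t + h) - 2 * f t by ring]
        _ ≤ K * -h := h'
    · rw [abs_of_pos hpos]; exact hZyg t h hpos
  have hfc : Continuous f := zyg_continuous f K M hK hM hbdd hZ
  have hfli : MeasureTheory.LocallyIntegrable f := hfc.locallyIntegrable
  have hρ'c : Continuous (deriv ρ) := hρ_smooth.continuous_deriv (by simp)
  have hρ'supp : ∀ x, x ∉ Icc (-1 : ℝ) 1 → deriv ρ x = 0 := by
    intro x hx
    have hopen : IsOpen (Icc (-1:ℝ) 1)ᶜ := isClosed_Icc.isOpen_compl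
    have hev : ρ =ᶠ[nhds x] (fun _ => (0:ℝ)) :=
      Filter.eventually_of_mem (hopen.mem_nhds hx) (fun y hy => hρ_supp y hy)
    rw [hev.deriv_eq, deriv_const]
  set A := ∫ x, |deriv ρ x| with hAdef
  have hA0 : 0 ≤ A := integral_nonneg (fun x => abs_nonneg _)
  set C₀ := 3 * K / 2 + 2 * M with hC₀def
  have hC₀ : 0 ≤ C₀ := by rw [hC₀def]; linarith
  refine ⟨C₀ * A + 1, by nlinarith, ?_⟩
  rintro ε ⟨hε0, hε1⟩ t
  set L := Real.log (1 + γ + 1 / ε) with hLdef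
  have hL1 : 1 ≤ L := zyg_log_ge_one hγ hε0 hε1
  have hL0 : 0 ≤ L := by linarith
  set k : ℝ → ℝ := fun u => (1 / ε) * ρ (u / ε) with hkdef
  have hmem_scale : ∀ u : ℝ, u ∉ Icc (-ε) ε → u / ε ∉ Icc (-1:ℝ) 1 := by
    intro u hu hmem
    apply hu
    rw [mem_Icc] at hmem ⊢
    constructor
    · have := hmem.1
      rw [le_div_iff₀ hε0] at this; linarith
    · have := hmem.2
      rw [div_le_one hε0] at this; linarith
  have hk_supp : HasCompactSupport k := by
    apply HasCompactSupport.intro (isCompact_Icc (a := -ε) (b := ε))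
    intro x hx
    rw [hkdef]
    simp [hρ_supp _ (hmem_scale x hx)]
  have hksm : ContDiff ℝ (⊤ : ℕ∞) k := contDiff_const.mul (hρ_smooth.comp (contDiff_id.div_const ε))
  have hk1 : ContDiff ℝ 1 k := hksm.of_le (by simp)
  have hk'_eq : deriv k = fun u => 1 / ε * (deriv ρ (u / ε) * (1 / ε)) := by
    funext u
    have hd1 : HasDerivAt (fun x : ℝ => x / ε) (1 / ε) u := by
      simpa using (hasDerivAt_id u).div_const ε
    have hd2 : HasDerivAt ρ (deriv ρ (u / ε)) (u / ε) :=
      ((hρ_smooth.differentiable (by simp)) (u / ε)).hasDerivAt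
    have hd3 := (hd2.comp u hd1).const_mul (1 / ε)
    exact hd3.deriv
  have hk'_zero : ∀ u, u ∉ Icc (-ε) ε → deriv k u = 0 := by
    intro u hu
    rw [hk'_eq]
    simp [hρ'supp _ (hmem_scale u hu)]
  have hk'_cont : Continuous (deriv k) := hksm.continuous_deriv (by simp)
  -- the function equals the convolution
  have conv_eq : (fun τ => ∫ s, (1 / ε) * ρ ((τ - s) / ε) * f s)
      = (f ⋆[ContinuousLinearMap.mul ℝ ℝ, volume] k) := by
    funext τ
    rw [convolution_def]
    congr 1
    funext s
    simp only [ContinuousLinearMap.mul_apply', hkdef]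
    ring
  have hderiv := HasCompactSupport.hasDerivAt_convolution_right
    (ContinuousLinearMap.mul ℝ ℝ) hfli hk_supp hk1 t
  have hderiv_eq : deriv (fun τ => ∫ s, (1 / ε) * ρ ((τ - s) / ε) * f s) t
      = ∫ s, f s * deriv k (t - s) := by
    rw [conv_eq, hderiv.deriv, convolution_def]
    simp only [ContinuousLinearMap.mul_apply']
  -- integrability
  have hcont_sub : Continuous (fun s => deriv k (t - s)) :=
    hk'_cont.comp (continuous_const.sub continuous_id)
  have hsupp_sub : ∀ s, s ∉ Icc (t - ε) (t + ε) → deriv k (t - s) = 0 := by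
    intro s hs
    apply hk'_zero
    intro hmem
    apply hs
    rw [mem_Icc] at hmem ⊢
    constructor <;> linarith [hmem.1, hmem.2]
  have hI1 : MeasureTheory.Integrable (fun s => deriv k (t - s)) := by
    apply hcont_sub.integrable_of_hasCompactSupport
    exact HasCompactSupport.intro (isCompact_Icc (a := t - ε) (b := t + ε)) hsupp_sub
  have hI2 : MeasureTheory.Integrable (fun s => (f s - f t) * deriv k (t - s)) := by
    apply ((hfc.sub continuous_const).mul hcont_sub).integrable_of_hasCompactSupport
    apply HasCompactSupport.intro (isCompact_Icc (a := t - ε) (b := t + ε))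
    intro s hs
    simp only [Pi.mul_apply, hsupp_sub s hs, mul_zero]
  -- ∫ deriv k = 0
  have hρ'int : ∫ x, deriv ρ x = 0 := by
    rw [← setIntegral_eq_integral_of_forall_compl_eq_zero
      (s := Icc (-2:ℝ) 2) (fun x hx => hρ'supp x (fun hmem => hx ⟨by linarith [hmem.1], by linarith [hmem.2]⟩))]
    rw [MeasureTheory.integral_Icc_eq_integral_Ioc,
      ← intervalIntegral.integral_of_le (by norm_num : (-2:ℝ) ≤ 2)]
    rw [intervalIntegral.integral_deriv_eq_sub
      (fun x _ => (hρ_smooth.differentiable (by simp)) x)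
      ((hρ'c.intervalIntegrable _ _))]
    rw [hρ_supp 2 (by norm_num [mem_Icc]), hρ_supp (-2) (by norm_num [mem_Icc])]
    ring
  have hzero : ∫ s, deriv k (t - s) = 0 := by
    rw [MeasureTheory.integral_sub_left_eq_self (deriv k) volume t, hk'_eq]
    have : ∫ u, 1 / ε * (deriv ρ (u / ε) * (1 / ε)) = (1/ε) * ((1/ε) * ∫ u, deriv ρ (u / ε)) := by
      rw [MeasureTheory.integral_const_mul]
      congr 1
      rw [← MeasureTheory.integral_const_mul]
      congr 1; funext u; ring
    rw [this, MeasureTheory.Measure.integral_comp_div (fun x => deriv ρ x) ε, hρ'int]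
    simp
  have hsplit : ∫ s, f s * deriv k (t - s) = ∫ s, (f s - f t) * deriv k (t - s) := by
    have : ∫ s, f s * deriv k (t - s)
        = ∫ s, ((f s - f t) * deriv k (t - s) + f t * deriv k (t - s)) := by
      congr 1; funext s; ring
    rw [this, MeasureTheory.integral_add hI2 (hI1.const_mul (f t)),
      MeasureTheory.integral_const_mul, hzero]
    ring
  -- the key pointwise bound
  have hkey : ∀ s : ℝ, ‖(f s - f t) * deriv k (t - s)‖ ≤ C₀ * (ε * L) * ‖deriv k (t - s)‖ := by
    intro s
    by_cases hs : |s - t| ≤ ε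
    · rw [norm_mul]
      apply mul_le_mul_of_nonneg_right _ (norm_nonneg _)
      have := zyg_key f K M hK hM hbdd hZ γ hγ ε hε0 hε1 t (s - t) hs
      rw [show t + (s - t) = s by ring] at this
      rw [Real.norm_eq_abs, hC₀def, hLdef]
      exact this
    · have hz : deriv k (t - s) = 0 := by
        apply hk'_zero
        intro hmem
        apply hs
        rw [mem_Icc] at hmem
        rw [abs_le]
        constructor <;> linarith [hmem.1, hmem.2]
      rw [hz]
      simp
  have hnorm := MeasureTheory.norm_integral_le_of_norm_le
    (hI1.norm.const_mul (C₀ * (ε * L))) (Filter.Eventually.of_forall hkey)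
  have hA_calc : ∫ s, ‖deriv k (t - s)‖ = (1/ε) * A := by
    rw [MeasureTheory.integral_sub_left_eq_self (fun u => ‖deriv k u‖) volume t, hk'_eq]
    have heq : ∀ u : ℝ, ‖1/ε * (deriv ρ (u/ε) * (1/ε))‖
        = (1/ε) * ((1/ε) * |deriv ρ (u/ε)|) := by
      intro u
      rw [Real.norm_eq_abs, abs_mul, abs_mul, abs_of_pos (by positivity : (0:ℝ) < 1/ε)]
      ring
    simp only [heq]
    rw [MeasureTheory.integral_const_mul, MeasureTheory.integral_const_mul,
      MeasureTheory.Measure.integral_comp_div (fun x => |deriv ρ x|) ε,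
      abs_of_pos hε0, smul_eq_mul, hAdef]
    field_simp
  have hεL : ε * (1/ε) = 1 := by field_simp
  calc |deriv (fun τ => ∫ s, (1 / ε) * ρ ((τ - s) / ε) * f s) t|
      = ‖∫ s, (f s - f t) * deriv k (t - s)‖ := by
        rw [Real.norm_eq_abs, hderiv_eq, hsplit]
    _ ≤ ∫ s, C₀ * (ε * L) * ‖deriv k (t - s)‖ := hnorm
    _ = C₀ * (ε * L) * ((1/ε) * A) := by
        rw [MeasureTheory.integral_const_mul, hA_calc]
    _ = C₀ * A * L * (ε * (1/ε)) := by ring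
    _ = C₀ * A * L := by rw [hεL, mul_one]
    _ ≤ (C₀ * A + 1) * L := by nlinarith
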